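/- arXiv:2105.05446 — 7 statements merged into one kernel-verified Lean document; each statement's English description precedes it below -/
import Mathlib

section
/- For the IMQ-RBF interpolant r(x) = λ_0/√(1+ε²(x−x_0)²) + λ_1/√(1+ε²(x−x_1)²) satisfying r(x_0)=u_0, r(x_1)=u_1 with x_1 = x_0 + h, h>0, ε>0, the derivative at x_0 equals r'(x_0) = (u_1√(1+ε²h²) − u_0)/((1+ε²h²)h). -/
open Real

lemma hasDerivAt_div_sqrt_one_add_sq (lam c ε y : ℝ) :
    HasDerivAt (fun x => lam / √(1 + ε ^ 2 * (x - c) ^ 2))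
      (-(lam * ε ^ 2 * (y - c)) / √(1 + ε ^ 2 * (y - c) ^ 2) ^ 3) y := by
  have hpos : 0 < 1 + ε ^ 2 * (y - c) ^ 2 := by positivity
  have hq : HasDerivAt (fun x => 1 + ε ^ 2 * (x - c) ^ 2) (ε ^ 2 * (2 * (y - c))) y := by
    simpa using ((((hasDerivAt_id y).sub_const c).pow 2).const_mul (ε ^ 2)).const_add 1
  have hs_ne : √(1 + ε ^ 2 * (y - c) ^ 2) ≠ 0 := (sqrt_pos.mpr hpos).ne'
  refine ((hasDerivAt_const y lam).div (hq.sqrt hpos.ne') hs_ne).congr_deriv ?_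
  field_simp
  ring

lemma sub_eq_of_two_point_interpolation {s a b u₀ u₁ : ℝ} (hs : s ≠ 0)
    (h₀ : a + b / s = u₀) (h₁ : a / s + b = u₁) :
    u₁ * s - u₀ = b * (s ^ 2 - 1) / s := by
  subst h₀ h₁
  field_simp
  ring

theorem imq_interpolant_deriv_at_left_general (x0 h ε u0 u1 lam0 lam1 : ℝ)
    (hh : 0 < h)
    (r : ℝ → ℝ)
    (hr : r = fun x => lam0 / Real.sqrt (1 + ε^2 * (x - x0)^2) +
                       lam1 / Real.sqrt (1 + ε^2 * (x - (x0 + h))^2))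
    (h0 : r x0 = u0) (h1 : r (x0 + h) = u1) :
    HasDerivAt r ((u1 * Real.sqrt (1 + ε^2 * h^2) - u0) / ((1 + ε^2 * h^2) * h)) x0 := by
  subst hr
  have hpos : 0 < 1 + ε ^ 2 * h ^ 2 := by positivity
  have hs_sq : √(1 + ε ^ 2 * h ^ 2) ^ 2 = 1 + ε ^ 2 * h ^ 2 := sq_sqrt hpos.le
  have hs_ne : √(1 + ε ^ 2 * h ^ 2) ≠ 0 := (sqrt_pos.mpr hpos).ne'
  have e0 : lam0 + lam1 / √(1 + ε ^ 2 * h ^ 2) = u0 := by simpa using h0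
  have e1 : lam0 / √(1 + ε ^ 2 * h ^ 2) + lam1 = u1 := by simpa using h1
  refine ((hasDerivAt_div_sqrt_one_add_sq lam0 x0 ε x0).add
    (hasDerivAt_div_sqrt_one_add_sq lam1 (x0 + h) ε x0)).congr_deriv ?_
  rw [sub_eq_of_two_point_interpolation hs_ne e0 e1]
  simp only [sub_self, mul_zero, neg_zero, zero_div, zero_add, sub_add_cancel_left, neg_sq]
  field_simp
  rw [hs_sq]
  ring

/-- Derivative of the IMQ-RBF interpolant at `x0`. -/
theorem imq_interpolant_deriv_at_left (x0 h ε u0 u1 lam0 lam1 : ℝ)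
    (hh : 0 < h) (hε : 0 < ε)
    (r : ℝ → ℝ)
    (hr : r = fun x => lam0 / Real.sqrt (1 + ε^2 * (x - x0)^2) +
                       lam1 / Real.sqrt (1 + ε^2 * (x - (x0 + h))^2))
    (h0 : r x0 = u0) (h1 : r (x0 + h) = u1) :
    HasDerivAt r ((u1 * Real.sqrt (1 + ε^2 * h^2) - u0) / ((1 + ε^2 * h^2) * h)) x0 :=
  imq_interpolant_deriv_at_left_general x0 h ε u0 u1 lam0 lam1 hh r hr h0 h1
end

section
/- For the IQ-RBF interpolant r(x) = λ_0/(1+ε²(x−x_0)²) + λ_1/(1+ε²(x−x_1)²) satisfying r(x_0)=u_0, r(x_1)=u_1 with x_1 = x_0 + h, h>0, ε>0, the derivative at x_0 equals r'(x_0) = 2(u_1(1+ε²h²) − u_0)/((1+ε²h²)(2+ε²h²)h). -/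
/-! The basis function centred at `x₀` is flat there, so `r'(x₀) = 2 λ₁ ε² h / (1 + ε² h²)²`;
the interpolation conditions give `u₁ (1 + ε² h²) - u₀ = λ₁ ε² h² (2 + ε² h²) / (1 + ε² h²)`,
and eliminating `λ₁` yields the formula. -/

theorem hasDerivAt_div_one_add_sq_mul_sub_sq (lam ε c x : ℝ) :
    HasDerivAt (fun y => lam / (1 + ε ^ 2 * (y - c) ^ 2))
      (-(2 * lam * ε ^ 2 * (x - c)) / (1 + ε ^ 2 * (x - c) ^ 2) ^ 2) x := by
  have hq : HasDerivAt (fun y => 1 + ε ^ 2 * (y - c) ^ 2) (ε ^ 2 * (2 * (x - c))) x := by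
    simpa using (((hasDerivAt_id x).sub_const c).pow 2).const_mul (ε ^ 2) |>.const_add 1
  exact ((hasDerivAt_const x lam).div hq (by positivity)).congr_deriv (by ring)

/-- At `h = 0` both sides vanish, the right one through `x / 0 = 0`. -/
theorem iq_left_slope_eq_of_interpolation {ε h lam0 lam1 u0 u1 : ℝ}
    (hu0 : lam0 + lam1 / (1 + ε ^ 2 * h ^ 2) = u0)
    (hu1 : lam0 / (1 + ε ^ 2 * h ^ 2) + lam1 = u1) :
    2 * lam1 * ε ^ 2 * h / (1 + ε ^ 2 * h ^ 2) ^ 2 =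
      2 * (u1 * (1 + ε ^ 2 * h ^ 2) - u0) / ((1 + ε ^ 2 * h ^ 2) * (2 + ε ^ 2 * h ^ 2) * h) := by
  subst hu0 hu1
  rcases eq_or_ne h 0 with rfl | hh
  · simp
  · field_simp
    ring

theorem iq_interpolant_deriv_at_left_general (x0 h ε u0 u1 lam0 lam1 : ℝ)
    (r : ℝ → ℝ)
    (hr : r = fun x => lam0 / (1 + ε^2 * (x - x0)^2) +
                       lam1 / (1 + ε^2 * (x - (x0 + h))^2))
    (h0 : r x0 = u0) (h1 : r (x0 + h) = u1) :
    HasDerivAt r (2 * (u1 * (1 + ε^2 * h^2) - u0) /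
      ((1 + ε^2 * h^2) * (2 + ε^2 * h^2) * h)) x0 := by
  subst hr
  have hleft : x0 - (x0 + h) = -h := by ring
  have hright : x0 + h - x0 = h := by ring
  simp only [sub_self, hleft, hright, neg_sq] at h0 h1
  refine ((hasDerivAt_div_one_add_sq_mul_sub_sq lam0 ε x0 x0).add
    (hasDerivAt_div_one_add_sq_mul_sub_sq lam1 ε (x0 + h) x0)).congr_deriv ?_
  rw [← iq_left_slope_eq_of_interpolation (by simpa using h0) (by simpa using h1)]
  simp only [sub_self, hleft]
  ring

/-- Derivative of the IQ-RBF interpolant at `x0`. -/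
theorem iq_interpolant_deriv_at_left (x0 h ε u0 u1 lam0 lam1 : ℝ)
    (hh : 0 < h) (hε : 0 < ε)
    (r : ℝ → ℝ)
    (hr : r = fun x => lam0 / (1 + ε^2 * (x - x0)^2) +
                       lam1 / (1 + ε^2 * (x - (x0 + h))^2))
    (h0 : r x0 = u0) (h1 : r (x0 + h) = u1) :
    HasDerivAt r (2 * (u1 * (1 + ε^2 * h^2) - u0) /
      ((1 + ε^2 * h^2) * (2 + ε^2 * h^2) * h)) x0 :=
  iq_interpolant_deriv_at_left_general x0 h ε u0 u1 lam0 lam1 r hr h0 h1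
end

section
/- If u is a C^∞ real function with u(t_n) ≠ 0 or more precisely u(t_n) + ε² u(t_n) well-defined, then the IMQ-RBF Euler local truncation error τ(h) = (u(t_n+h) − ((1+ε²h²)h u'(t_n) + u(t_n))/√(1+ε²h²))/h satisfies τ(h) = h(u''(t_n)/2 + ε² u(t_n)/2) + O(h²) as h → 0; in particular τ(h)/h → u''(t_n)/2 + ε² u(t_n)/2. -/
open Filter Asymptotics Set

/-- If `f 0 = 0` and `deriv f = O(h^n)` at `0`, then `f = O(h^(n+1))` at `0`. -/
lemma imq_aux_stepO {f : ℝ → ℝ} {n : ℕ} (hf : Differentiable ℝ f) (h0 : f 0 = 0)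
    (hd : deriv f =O[nhds 0] fun h : ℝ => h ^ n) :
    f =O[nhds 0] fun h : ℝ => h ^ (n + 1) := by
  rw [isBigO_iff] at hd
  obtain ⟨C, hC⟩ := hd
  rw [Metric.eventually_nhds_iff] at hC
  obtain ⟨δ, hδ, hb⟩ := hC
  rw [isBigO_iff]
  refine ⟨|C|, Metric.eventually_nhds_iff.2 ⟨δ, hδ, fun x hx => ?_⟩⟩
  simp only [Real.dist_eq, sub_zero] at hx hb
  have key : ‖f x - f 0‖ ≤ (|C| * |x| ^ n) * ‖x - 0‖ := by
    apply Convex.norm_image_sub_le_of_norm_hasDerivWithin_le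
      (f' := deriv f) (s := uIcc 0 x)
      (fun y _ => (hf y).hasDerivAt.hasDerivWithinAt) ?_ (convex_uIcc 0 x)
      left_mem_uIcc right_mem_uIcc
    intro y hy
    have hyx : |y| ≤ |x| := by
      rcases mem_uIcc.1 hy with ⟨h1, h2⟩ | ⟨h1, h2⟩
      · rw [abs_of_nonneg h1]; exact le_trans h2 (le_abs_self x)
      · rw [abs_of_nonpos h2]; exact le_trans (neg_le_neg h1) (neg_le_abs x)
    calc ‖deriv f y‖ ≤ C * ‖y ^ n‖ := hb (lt_of_le_of_lt hyx hx)
      _ ≤ |C| * |x| ^ n := by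
          rw [Real.norm_eq_abs, abs_pow]
          exact mul_le_mul (le_abs_self C) (pow_le_pow_left₀ (abs_nonneg y) hyx n)
            (by positivity) (abs_nonneg C)
  rw [h0, sub_zero, sub_zero] at key
  calc ‖f x‖ ≤ |C| * |x| ^ n * ‖x‖ := key
    _ = |C| * ‖x ^ (n + 1)‖ := by
        rw [Real.norm_eq_abs, Real.norm_eq_abs, abs_pow, pow_succ]; ring

/-- Leading term of the IMQ-RBF Euler local truncation error. -/
theorem imq_euler_truncation_leading_term (u : ℝ → ℝ) (tn ε : ℝ)
    (hu : ContDiff ℝ (⊤ : ℕ∞) u) :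
    ((fun h : ℝ =>
        (u (tn + h) - ((1 + ε^2 * h^2) * h * deriv u tn + u tn) /
            Real.sqrt (1 + ε^2 * h^2)) / h
          - h * (iteratedDeriv 2 u tn / 2 + ε^2 * u tn / 2))
        =O[nhds 0] fun h : ℝ => h^2) ∧
    Tendsto (fun h : ℝ =>
        ((u (tn + h) - ((1 + ε^2 * h^2) * h * deriv u tn + u tn) /
            Real.sqrt (1 + ε^2 * h^2)) / h) / h)
      (nhdsWithin 0 {0}ᶜ)
      (nhds (iteratedDeriv 2 u tn / 2 + ε^2 * u tn / 2)) := by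
  have hdu : Differentiable ℝ u := hu.differentiable (by simp)
  have hui : ContDiff ℝ (⊤ : ℕ∞) u := hu.of_le (by simp)
  have hu1 : ContDiff ℝ (⊤ : ℕ∞) (deriv u) := (contDiff_infty_iff_deriv.mp hui).2
  have hdu1 : Differentiable ℝ (deriv u) := hu1.differentiable (by simp)
  have hu2 : ContDiff ℝ (⊤ : ℕ∞) (deriv (deriv u)) := (contDiff_infty_iff_deriv.mp hu1).2
  have hdu2 : Differentiable ℝ (deriv (deriv u)) :=
    hu2.differentiable (by simp)
  set U : ℝ := u tn with hU
  set d : ℝ := deriv u tn with hd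
  set D : ℝ := iteratedDeriv 2 u tn with hDdef
  have hD : D = deriv (deriv u) tn := by
    rw [hDdef, iteratedDeriv_succ, iteratedDeriv_one]
  set c : ℝ := D / 2 + ε^2 * U / 2 with hc
  -- basic facts about the sqrt
  have hspos : ∀ h : ℝ, 0 < Real.sqrt (1 + ε^2 * h^2) := fun h =>
    Real.sqrt_pos.2 (by positivity)
  have hs1 : ∀ h : ℝ, 1 ≤ Real.sqrt (1 + ε^2 * h^2) := fun h =>
    Real.one_le_sqrt.2 (le_add_of_nonneg_right (by positivity))
  have hs2 : ∀ h : ℝ, (Real.sqrt (1 + ε^2 * h^2))^2 = 1 + ε^2 * h^2 := fun h =>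
    Real.sq_sqrt (by positivity)
  -- composition derivative helper
  have comp_d : ∀ (g : ℝ → ℝ), Differentiable ℝ g → ∀ x : ℝ,
      HasDerivAt (fun h => g (tn + h)) (deriv g (tn + x)) x := by
    intro g hg x
    simpa [Function.comp_def] using (hg (tn + x)).hasDerivAt.comp x ((hasDerivAt_id x).const_add tn)
  -- Taylor remainder of u at tn
  set R : ℝ → ℝ := fun h => u (tn + h) - U - d * h - D / 2 * h^2 with hRdef
  set r1 : ℝ → ℝ := fun h => deriv u (tn + h) - d - D * h with hr1def
  set r2 : ℝ → ℝ := fun h => deriv (deriv u) (tn + h) - D with hr2def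
  have hr1at : ∀ x : ℝ, HasDerivAt r1 (r2 x) x := by
    intro x
    have := ((comp_d (deriv u) hdu1 x).sub (hasDerivAt_const x d)).sub
      ((hasDerivAt_id x).const_mul D)
    exact this.congr_deriv (by simp [hr2def])
  have hRat : ∀ x : ℝ, HasDerivAt R (r1 x) x := by
    intro x
    have := (((comp_d u hdu x).sub (hasDerivAt_const x U)).sub
      ((hasDerivAt_id x).const_mul d)).sub ((hasDerivAt_pow 2 x).const_mul (D / 2))
    exact this.congr_deriv (by simp only [hr1def]; norm_num; ring)
  have hr2O : r2 =O[nhds 0] fun h : ℝ => h ^ 1 := by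
    have hdiff : DifferentiableAt ℝ (fun y : ℝ => deriv (deriv u) (tn + y)) 0 :=
      (hdu2 (tn + 0)).comp 0 (((differentiable_const tn).add differentiable_id) 0)
    have h1 := hdiff.isBigO_sub
    simp only [add_zero, sub_zero] at h1
    have he : r2 = fun x : ℝ => deriv (deriv u) (tn + x) - deriv (deriv u) tn := by
      funext x; rw [hr2def]; simp [hD]
    have he2 : (fun x : ℝ => x ^ 1) = fun x : ℝ => x := by funext x; rw [pow_one]
    rw [he, he2]
    exact h1
  have hr1O : r1 =O[nhds 0] fun h : ℝ => h ^ 2 := by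
    have hdif : Differentiable ℝ r1 := fun x => (hr1at x).differentiableAt
    have h0 : r1 0 = 0 := by simp [hr1def, hd]
    have hder : deriv r1 = r2 := funext fun x => (hr1at x).deriv
    exact imq_aux_stepO hdif h0 (hder ▸ hr2O)
  have hRO : R =O[nhds 0] fun h : ℝ => h ^ 3 := by
    have hdif : Differentiable ℝ R := fun x => (hRat x).differentiableAt
    have h0 : R 0 = 0 := by simp [hRdef, hU]
    have hder : deriv R = r1 := funext fun x => (hRat x).deriv
    exact imq_aux_stepO hdif h0 (hder ▸ hr1O)
  -- sqrt correction terms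
  have hQO : (fun h : ℝ => h * (1 - Real.sqrt (1 + ε^2 * h^2))) =O[nhds 0]
      fun h : ℝ => h ^ 3 := by
    rw [isBigO_iff]
    refine ⟨ε^2, Eventually.of_forall fun h => ?_⟩
    have h1 := hs1 h
    have h2 := hs2 h
    have habs : |1 - Real.sqrt (1 + ε^2 * h^2)| ≤ ε^2 * h^2 := by
      rw [abs_sub_comm, abs_le]; constructor <;> nlinarith
    rw [Real.norm_eq_abs, Real.norm_eq_abs, abs_mul]
    calc |h| * |1 - Real.sqrt (1 + ε^2 * h^2)| ≤ |h| * (ε^2 * h^2) :=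
          mul_le_mul_of_nonneg_left habs (abs_nonneg h)
      _ = ε^2 * |h^3| := by rw [abs_pow, ← sq_abs h]; ring
  have hPO : (fun h : ℝ => 1 - 1 / Real.sqrt (1 + ε^2 * h^2) - ε^2 * h^2 / 2) =O[nhds 0]
      fun h : ℝ => h ^ 3 := by
    rw [isBigO_iff]
    refine ⟨ε^4, Metric.eventually_nhds_iff.2 ⟨1, one_pos, fun h hh => ?_⟩⟩
    simp only [Real.dist_eq, sub_zero] at hh
    have h1 := hs1 h
    have h2 := hs2 h
    have hsp := hspos h
    set s := Real.sqrt (1 + ε^2 * h^2) with hsdef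
    set x : ℝ := ε^2 * h^2 with hxdef
    have hx : 0 ≤ x := by positivity
    have hsx : s - 1 ≤ x := by nlinarith
    have key : |s - 1 - x * s / 2| ≤ x^2 := by
      rw [abs_le]
      constructor
      · nlinarith [sq_nonneg (s-1), mul_nonneg hx (sub_nonneg.2 h1)]
      · nlinarith [sq_nonneg (s-1), mul_nonneg hx (sub_nonneg.2 h1)]
    have hP1 : |1 - 1 / s - x / 2| ≤ x^2 := by
      have heq : 1 - 1 / s - x / 2 = (s - 1 - x * s / 2) / s := by
        field_simp
      rw [heq, abs_div, abs_of_pos hsp]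
      exact (div_le_self (abs_nonneg _) h1).trans key
    have h4 : h^4 ≤ |h|^3 := by
      have habs4 : h^4 = |h|^4 := by
        rw [← abs_pow]; exact (abs_of_nonneg (by positivity)).symm
      rw [habs4, pow_succ]
      calc |h|^3 * |h| ≤ |h|^3 * 1 := mul_le_mul_of_nonneg_left hh.le (by positivity)
        _ = |h|^3 := mul_one _
    rw [Real.norm_eq_abs, Real.norm_eq_abs, abs_pow]
    calc |1 - 1 / s - x / 2| ≤ x^2 := hP1
      _ = ε^4 * h^4 := by rw [hxdef]; ring
      _ ≤ ε^4 * |h|^3 := mul_le_mul_of_nonneg_left h4 (by positivity)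
  -- the combined numerator
  set F : ℝ → ℝ := fun h =>
    R h + U * (1 - 1 / Real.sqrt (1 + ε^2 * h^2) - ε^2 * h^2 / 2)
      + d * (h * (1 - Real.sqrt (1 + ε^2 * h^2))) with hFdef
  have hFO : F =O[nhds 0] fun h : ℝ => h ^ 3 :=
    (hRO.add (hPO.const_mul_left U)).add (hQO.const_mul_left d)
  -- key pointwise identity
  have hkey : ∀ h : ℝ,
      (u (tn + h) - ((1 + ε^2 * h^2) * h * d + U) / Real.sqrt (1 + ε^2 * h^2)) / h
        - h * c = F h * h⁻¹ := by
    intro h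
    rcases eq_or_ne h 0 with rfl | hh
    · simp [hFdef, hRdef, hU, Real.sqrt_one]
    · have h2 := hs2 h
      have hsne : Real.sqrt (1 + ε^2 * h^2) ≠ 0 := (hspos h).ne'
      simp only [hFdef, hRdef, hc]
      generalize hgen : Real.sqrt (1 + ε^2 * h^2) = s at h2 hsne ⊢
      rw [← h2]
      field_simp
      ring
  have hid3 : (fun h : ℝ => h ^ 3 * h⁻¹) = fun h : ℝ => h ^ 2 := by
    funext h
    rcases eq_or_ne h 0 with rfl | hh
    · simp
    · field_simp
  have hid2 : (fun h : ℝ => h ^ 2 * h⁻¹) = fun h : ℝ => h := by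
    funext h
    rcases eq_or_ne h 0 with rfl | hh
    · simp
    · field_simp
  have hG2 : (fun h : ℝ => F h * h⁻¹) =O[nhds 0] fun h : ℝ => h ^ 2 := by
    rw [← hid3]
    exact hFO.mul (isBigO_refl (fun h : ℝ => h⁻¹) _)
  have goal1 : (fun h : ℝ =>
      (u (tn + h) - ((1 + ε^2 * h^2) * h * d + U) /
          Real.sqrt (1 + ε^2 * h^2)) / h - h * c)
      =O[nhds 0] fun h : ℝ => h^2 := by
    have heqf : (fun h : ℝ =>
        (u (tn + h) - ((1 + ε^2 * h^2) * h * d + U) /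
            Real.sqrt (1 + ε^2 * h^2)) / h - h * c)
        = fun h : ℝ => F h * h⁻¹ := funext fun h => hkey h
    rw [heqf]
    exact hG2
  refine ⟨goal1, ?_⟩
  -- second goal
  have hGO : (fun h : ℝ => (F h * h⁻¹) * h⁻¹) =O[nhds 0] fun h : ℝ => h := by
    rw [← hid2]
    exact hG2.mul (isBigO_refl (fun h : ℝ => h⁻¹) _)
  have htend0 : Tendsto (fun h : ℝ => (F h * h⁻¹) * h⁻¹) (nhdsWithin 0 {0}ᶜ)
      (nhds 0) :=
    (hGO.mono nhdsWithin_le_nhds).trans_tendsto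
      (tendsto_id.mono_left nhdsWithin_le_nhds)
  have htend : Tendsto (fun h : ℝ => (F h * h⁻¹) * h⁻¹ + c) (nhdsWithin 0 {0}ᶜ)
      (nhds c) := by
    simpa using htend0.add (tendsto_const_nhds (x := c))
  refine htend.congr' ?_
  filter_upwards [self_mem_nhdsWithin] with h hh
  have hh0 : h ≠ 0 := by simpa using hh
  have heq : (u (tn + h) - ((1 + ε^2 * h^2) * h * d + U) / Real.sqrt (1 + ε^2 * h^2)) / h
      = F h * h⁻¹ + h * c := by linarith [hkey h]
  rw [heq]
  field_simp
end

section
/- Under the choice ε_n² = −u''(t_n)/u(t_n) (assuming u(t_n) ≠ 0), the IMQ-RBF Euler local truncation error τ(h) = (u(t_n+h) − ((1+ε_n²h²)h u'(t_n) + u(t_n))/√(1+ε_n²h²))/h is O(h²) as h → 0. -/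
open Filter Asymptotics

/-- Integration step: if `g 0 = 0` and `deriv g = O(h^n)` near `0`, then `g = O(h^(n+1))`. -/
lemma isBigO_pow_succ_of_deriv {g : ℝ → ℝ} {n : ℕ}
    (hg : ∀ᶠ x in nhds (0:ℝ), DifferentiableAt ℝ g x) (h0 : g 0 = 0)
    (hO : deriv g =O[nhds 0] fun h => h ^ n) :
    g =O[nhds 0] fun h => h ^ (n+1) := by
  rcases hO.exists_pos with ⟨C, hC, hbound⟩
  rw [isBigOWith_iff] at hbound
  obtain ⟨δ, hδ, hball⟩ := Metric.eventually_nhds_iff_ball.mp (hbound.and hg)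
  rw [isBigO_iff]
  refine ⟨C, Metric.eventually_nhds_iff_ball.mpr ⟨δ, hδ, fun h hh => ?_⟩⟩
  have hseg : segment ℝ (0:ℝ) h ⊆ Metric.ball (0:ℝ) δ :=
    (convex_ball _ _).segment_subset (Metric.mem_ball_self hδ) hh
  have key : ‖g h - g 0‖ ≤ C * |h| ^ n * ‖h - 0‖ := by
    refine Convex.norm_image_sub_le_of_norm_hasDerivWithin_le
      (f' := deriv g) (fun x hx => ((hball x (hseg hx)).2.hasDerivAt).hasDerivWithinAt)
      (fun x hx => ?_) (convex_segment _ _) (left_mem_segment _ _ _) (right_mem_segment _ _ _)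
    have h1 := (hball x (hseg hx)).1
    have hxh : |x| ≤ |h| := by
      rcases hx with ⟨p, q, hp, hq, hpq, rfl⟩
      simp only [smul_eq_mul, mul_zero, zero_add]
      rw [abs_mul]
      calc |q| * |h| ≤ 1 * |h| := by
            apply mul_le_mul_of_nonneg_right _ (abs_nonneg h)
            rw [abs_of_nonneg hq]; linarith
        _ = |h| := one_mul _
    calc ‖deriv g x‖ ≤ C * ‖x ^ n‖ := h1
      _ = C * |x| ^ n := by rw [norm_pow]; rfl
      _ ≤ C * |h| ^ n :=
          mul_le_mul_of_nonneg_left (pow_le_pow_left₀ (abs_nonneg x) hxh n) hC.le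
  rw [h0, sub_zero, sub_zero] at key
  calc ‖g h‖ ≤ C * |h| ^ n * ‖h‖ := key
    _ = C * ‖h ^ (n+1)‖ := by
        rw [Real.norm_eq_abs, Real.norm_eq_abs, abs_pow, pow_succ]; ring

/-- With the optimal shape parameter ε² = −u''(tₙ)/u(tₙ), the IMQ-RBF Euler
local truncation error is O(h²). -/
theorem imq_euler_optimal_shape_second_order (u : ℝ → ℝ) (tn : ℝ)
    (hu : ContDiff ℝ (⊤ : ℕ∞) u) (hun : u tn ≠ 0) :
    (fun h : ℝ =>
        (u (tn + h) -
            ((1 + (-(iteratedDeriv 2 u tn) / u tn) * h^2) * h * deriv u tn + u tn) /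
              Real.sqrt (1 + (-(iteratedDeriv 2 u tn) / u tn) * h^2)) / h)
      =O[nhds 0] fun h : ℝ => h^2 := by
  set a := u tn with ha
  set b := deriv u tn with hb
  set d := iteratedDeriv 2 u tn with hd
  set c := -d / a with hc
  set F : ℝ → ℝ := fun h =>
    u (tn + h) - ((1 + c * h^2) * h * b + a) / Real.sqrt (1 + c * h^2) with hF
  set G : ℝ → ℝ := fun h =>
    deriv u (tn + h) -
      ((b + 3*b*c*h^2) * Real.sqrt (1 + c*h^2)
        - ((1 + c*h^2)*h*b + a) * (c*h / Real.sqrt (1 + c*h^2)))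
        / (Real.sqrt (1 + c*h^2))^2 with hG
  set s : Set ℝ := {h : ℝ | 0 < 1 + c * h^2} with hsdef
  have hs_open : IsOpen s := isOpen_lt continuous_const (by continuity)
  have h0s : (0:ℝ) ∈ s := by simp [hsdef]
  have hs_nhds : s ∈ nhds (0:ℝ) := hs_open.mem_nhds h0s
  have hsqpos : ∀ h ∈ s, 0 < Real.sqrt (1 + c*h^2) := fun h hh => Real.sqrt_pos.mpr hh
  have hs00 : Real.sqrt (1 + c*(0:ℝ)^2) = 1 := by norm_num
  -- derivative of the sqrt term
  have hq : ∀ h ∈ s, HasDerivAt (fun x => Real.sqrt (1 + c*x^2))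
      (c*h / Real.sqrt (1 + c*h^2)) h := by
    intro h hh
    have hinner : HasDerivAt (fun x : ℝ => 1 + c*x^2) (c*(2*h^1)) h :=
      ((hasDerivAt_pow 2 h).const_mul c).const_add 1
    have houter := (Real.hasDerivAt_sqrt (ne_of_gt hh)).comp h hinner
    refine houter.congr_deriv ?_
    have hne := ne_of_gt (hsqpos h hh)
    field_simp
  -- derivative of the numerator
  have hN : ∀ h : ℝ, HasDerivAt (fun x => (1 + c*x^2)*x*b + a) (b + 3*b*c*h^2) h := by
    intro h
    have : HasDerivAt (fun x : ℝ => (1 + c*x^2)*x*b + a)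
        (((c*(2*h^1))*h + (1+c*h^2)*1)*b) h :=
      (((((hasDerivAt_pow 2 h).const_mul c).const_add 1).mul
        (hasDerivAt_id h)).mul_const b).add_const a
    convert this using 1
    ring
  -- F has derivative G on s
  have hFd : ∀ h ∈ s, HasDerivAt F (G h) h := by
    intro h hh
    have hp1 : HasDerivAt (fun x => u (tn + x)) (deriv u (tn + h)) h := by
      have := ((hu.differentiable (by simp) (tn+h)).hasDerivAt).comp h
        ((hasDerivAt_id h).const_add tn)
      simpa [Function.comp_def] using this
    have hdiv := (hN h).div (hq h hh) (ne_of_gt (hsqpos h hh))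
    have := hp1.sub hdiv
    exact this
  have hG0 : G 0 = 0 := by simp [hG, hs00, hb]
  have hF0 : F 0 = 0 := by simp [hF, hs00, ha]
  -- smoothness of G on s
  have hu2 : ContDiff ℝ (⊤:ℕ∞) u := hu.of_le (by simp)
  have hdu : ContDiff ℝ (⊤:ℕ∞) (deriv u) := (contDiff_infty_iff_deriv.mp hu2).2
  have hGsmooth : ContDiffOn ℝ (⊤:ℕ∞) G s := by
    have hsq : ContDiffOn ℝ (⊤:ℕ∞) (fun h : ℝ => Real.sqrt (1 + c*h^2)) s := by
      intro h hh
      apply ContDiffAt.contDiffWithinAt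
      exact (Real.contDiffAt_sqrt (ne_of_gt hh)).comp h (by fun_prop)
    have hsqne : ∀ h ∈ s, Real.sqrt (1 + c*h^2) ≠ 0 := fun h hh => ne_of_gt (hsqpos h hh)
    rw [hG]
    apply ContDiffOn.sub
    · exact (hdu.comp (contDiff_const.add contDiff_id)).contDiffOn
    · apply ContDiffOn.div
      · apply ContDiffOn.sub
        · exact ContDiffOn.mul (by fun_prop) hsq
        · exact ContDiffOn.mul (by fun_prop) (ContDiffOn.div (by fun_prop) hsq hsqne)
      · exact hsq.pow 2
      · intro h hh
        exact pow_ne_zero 2 (hsqne h hh)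
  -- deriv G 0 = 0
  have hderivG0 : deriv G 0 = 0 := by
    have hsqd : HasDerivAt (fun x : ℝ => Real.sqrt (1 + c*x^2)) 0 0 := by
      have := hq 0 h0s
      simpa [hs00] using this
    have hp1 : HasDerivAt (fun x => deriv u (tn + x)) (deriv (deriv u) tn) 0 := by
      have := ((hdu.differentiable (by simp) (tn+0)).hasDerivAt).comp 0
        ((hasDerivAt_id 0).const_add tn)
      simpa [Function.comp_def] using this
    have hA : HasDerivAt (fun h : ℝ => b + 3*b*c*h^2) (3*b*c*(2*0^1)) 0 :=
      ((hasDerivAt_pow 2 (0:ℝ)).const_mul (3*b*c)).const_add b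
    have hD : HasDerivAt (fun h : ℝ => c*h / Real.sqrt (1 + c*h^2))
        ((c*1 * Real.sqrt (1+c*(0:ℝ)^2) - c*0*0) / (Real.sqrt (1+c*(0:ℝ)^2))^2) 0 :=
      ((hasDerivAt_id (0:ℝ)).const_mul c).div hsqd (by rw [hs00]; norm_num)
    have hnum := (hA.mul hsqd).sub ((hN 0).mul hD)
    have hden := hsqd.pow 2
    have hdiv := hnum.div hden (by simp only [Pi.pow_apply]; rw [hs00]; norm_num)
    have total := hp1.sub hdiv
    have total' : HasDerivAt G _ 0 := total
    rw [total'.deriv]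
    simp only [Pi.pow_apply, Pi.sub_apply, Pi.mul_apply]
    have h2 : deriv (deriv u) tn = d := by
      rw [hd, iteratedDeriv_succ, iteratedDeriv_one]
    rw [h2, hs00, hc]
    field_simp
    ring
  -- chain of integrations
  have hderivGdiff : DifferentiableAt ℝ (deriv G) 0 := by
    have h1 : ContDiffOn ℝ 1 (deriv G) s :=
      hGsmooth.deriv_of_isOpen hs_open (by decide)
    exact (h1.contDiffAt hs_nhds).differentiableAt (by simp)
  have hO1 : deriv G =O[nhds 0] fun h : ℝ => h ^ 1 := by
    have := hderivGdiff.hasDerivAt.hasFDerivAt.isBigO_sub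
    simpa [hderivG0, pow_one] using this
  have hGdiff_ev : ∀ᶠ x in nhds (0:ℝ), DifferentiableAt ℝ G x :=
    Filter.eventually_of_mem hs_nhds fun h hh =>
      ((hGsmooth.contDiffAt (hs_open.mem_nhds hh)).differentiableAt (by simp))
  have hGO2 : G =O[nhds 0] fun h : ℝ => h ^ 2 :=
    isBigO_pow_succ_of_deriv hGdiff_ev hG0 hO1
  have hderivF_eq : deriv F =ᶠ[nhds 0] G :=
    Filter.eventually_of_mem hs_nhds fun h hh => (hFd h hh).deriv
  have hFdiff_ev : ∀ᶠ x in nhds (0:ℝ), DifferentiableAt ℝ F x :=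
    Filter.eventually_of_mem hs_nhds fun h hh => (hFd h hh).differentiableAt
  have hFO2 : deriv F =O[nhds 0] fun h : ℝ => h ^ 2 :=
    hGO2.congr' hderivF_eq.symm Filter.EventuallyEq.rfl
  have hFO3 : F =O[nhds 0] fun h : ℝ => h ^ 3 :=
    isBigO_pow_succ_of_deriv hFdiff_ev hF0 hFO2
  -- conclude
  have final : (fun h : ℝ => F h / h) =O[nhds 0] fun h : ℝ => h ^ 2 := by
    rw [isBigO_iff] at hFO3 ⊢
    obtain ⟨C, hev⟩ := hFO3
    refine ⟨C, hev.mono fun h hhyp => ?_⟩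
    rcases eq_or_ne h 0 with rfl | hne
    · simp
    · rw [norm_div]
      rw [div_le_iff₀ (norm_pos_iff.mpr hne)]
      calc ‖F h‖ ≤ C * ‖h ^ 3‖ := hhyp
        _ = C * ‖h ^ 2‖ * ‖h‖ := by
            rw [Real.norm_eq_abs, Real.norm_eq_abs, Real.norm_eq_abs, abs_pow, abs_pow,
              pow_succ]; ring
  exact final
end

section
/- Let u_n > 0 and define ε⁻(h) = (6(u_n + h u_n') + √(36(u_n + h u_n')² + 9h²u_n(12u_n'' + 4h u_n''' + h²u_n⁗)))/(9h²u_n). Then h²·ε⁻(h) → 4/3 as h → 0⁺; in particular ε⁻(h) → +∞ and the corresponding truncation error does not vanish. -/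
/-!
The numerator `N(h) = 6 (uₙ + h uₙ') + √(…)` of `ε⁻(h)` is continuous with `N(0) = 6 uₙ + 6 |uₙ| = 12 uₙ`,
so `h² ε⁻(h) = N(h) / (9 uₙ) → 4/3`, and dividing by `h² → 0⁺` sends `ε⁻(h)` to `+∞`.
-/

open Filter Topology

noncomputable def imqMinusRootNumerator (un un' un'' un''' un'''' h : ℝ) : ℝ :=
  6 * (un + h * un') +
    √(36 * (un + h * un') ^ 2 + 9 * h ^ 2 * un * (12 * un'' + 4 * h * un''' + h ^ 2 * un''''))

theorem continuous_imqMinusRootNumerator (un un' un'' un''' un'''' : ℝ) :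
    Continuous (imqMinusRootNumerator un un' un'' un''' un'''') := by
  unfold imqMinusRootNumerator
  fun_prop

theorem imqMinusRootNumerator_zero {un : ℝ} (hun : 0 ≤ un) (un' un'' un''' un'''' : ℝ) :
    imqMinusRootNumerator un un' un'' un''' un'''' 0 = 12 * un := by
  have hsqrt : √(36 * un ^ 2) = 6 * un := by
    rw [show (36 : ℝ) * un ^ 2 = (6 * un) ^ 2 by ring, Real.sqrt_sq (by positivity)]
  simp only [imqMinusRootNumerator, zero_mul, add_zero, ne_eq, OfNat.ofNat_ne_zero,
    not_false_eq_true, zero_pow, mul_zero, hsqrt]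
  ring

theorem sq_mul_div_mul_sq_mul {h : ℝ} (hh : h ≠ 0) (x c d : ℝ) :
    h ^ 2 * (x / (c * h ^ 2 * d)) = x / (c * d) := by
  rw [mul_comm c, mul_assoc, ← div_div, ← mul_div_assoc, mul_div_cancel₀ _ (pow_ne_zero 2 hh)]

theorem tendsto_inv_sq_nhdsNE_zero : Tendsto (fun h : ℝ => (h ^ 2)⁻¹) (𝓝[≠] 0) atTop := by
  refine tendsto_inv_nhdsGT_zero.comp (tendsto_nhdsWithin_iff.2 ⟨?_, ?_⟩)
  · exact ((continuous_pow 2).tendsto' 0 0 (by simp)).mono_left nhdsWithin_le_nhds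
  · filter_upwards [self_mem_nhdsWithin] with h hh
    exact sq_pos_of_ne_zero hh

theorem tendsto_atTop_of_sq_mul_tendsto_pos {g : ℝ → ℝ} {L : ℝ} (hL : 0 < L)
    (hg : Tendsto (fun h => h ^ 2 * g h) (𝓝[≠] 0) (𝓝 L)) : Tendsto g (𝓝[≠] 0) atTop := by
  refine (hg.pos_mul_atTop hL tendsto_inv_sq_nhdsNE_zero).congr' ?_
  filter_upwards [self_mem_nhdsWithin] with h hh
  rw [mul_comm, ← mul_assoc, inv_mul_cancel₀ (pow_ne_zero 2 hh), one_mul]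

/-- For the inconsistent root ε⁻, h²·ε⁻(h) → 4/3 as h → 0⁺; in particular ε⁻ → +∞. -/
theorem imq_fourth_order_minus_root_limit (un un' un'' un''' un'''' : ℝ)
    (hpos : 0 < un) :
    Tendsto (fun h : ℝ =>
        h^2 * ((6 * (un + h * un') +
            Real.sqrt (36 * (un + h * un')^2 +
              9 * h^2 * un * (12 * un'' + 4 * h * un''' + h^2 * un''''))) /
          (9 * h^2 * un)))
      (nhdsWithin 0 (Set.Ioi 0)) (nhds (4 / 3)) ∧
    Tendsto (fun h : ℝ =>
        (6 * (un + h * un') +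
            Real.sqrt (36 * (un + h * un')^2 +
              9 * h^2 * un * (12 * un'' + 4 * h * un''' + h^2 * un''''))) /
          (9 * h^2 * un))
      (nhdsWithin 0 (Set.Ioi 0)) atTop := by
  set N := imqMinusRootNumerator un un' un'' un''' un''''
  have hN : Tendsto N (𝓝[≠] 0) (𝓝 (12 * un)) := by
    rw [← imqMinusRootNumerator_zero hpos.le un' un'' un''' un'''']
    exact (continuous_imqMinusRootNumerator _ _ _ _ _).continuousAt.tendsto.mono_left
      nhdsWithin_le_nhds
  have hscaled : Tendsto (fun h => h ^ 2 * (N h / (9 * h ^ 2 * un))) (𝓝[≠] 0) (𝓝 (4 / 3)) := by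
    have h43 : 12 * un / (9 * un) = 4 / 3 := by field_simp; ring
    rw [← h43]
    refine (hN.div_const (9 * un)).congr' ?_
    filter_upwards [self_mem_nhdsWithin] with h hh
    exact (sq_mul_div_mul_sq_mul hh _ _ _).symm
  exact ⟨hscaled.mono_left (nhdsGT_le_nhdsNE 0),
    (tendsto_atTop_of_sq_mul_tendsto_pos (by norm_num) hscaled).mono_left (nhdsGT_le_nhdsNE 0)⟩
end

section
/- Let u_n > 0 and define for the IQ-RBF method ε⁺(h) = ((u_n − h u_n'/2) − √((u_n − h u_n'/2)² + 4h²u_n(u_n''/2 + h u_n'''/6 + h²u_n⁗/24)))/(2h²u_n). Then ε⁺(h) → −u_n''/(2u_n) as h → 0⁺. -/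
open Filter

/-- The consistent root ε⁺ of the fourth-order condition for the IQ-RBF Euler
method converges to −uₙ''/(2uₙ) as h → 0⁺, for uₙ > 0. -/
theorem iq_fourth_order_plus_root_limit (un un' un'' un''' un'''' : ℝ)
    (hpos : 0 < un) :
    Tendsto (fun h : ℝ =>
        ((un - h * un' / 2) -
            Real.sqrt ((un - h * un' / 2)^2 +
              4 * h^2 * un * (un'' / 2 + h * un''' / 6 + h^2 * un'''' / 24))) /
          (2 * h^2 * un))
      (nhdsWithin 0 (Set.Ioi 0)) (nhds (-un'' / (2 * un))) := by
  set A : ℝ → ℝ := fun h => un - h * un' / 2 with hA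
  set C : ℝ → ℝ := fun h => un'' / 2 + h * un''' / 6 + h^2 * un'''' / 24 with hC
  set B : ℝ → ℝ := fun h => (A h)^2 + 4 * h^2 * un * C h with hB
  have hAc : Continuous A := by continuity
  have hCc : Continuous C := by continuity
  have hBc : Continuous B := by continuity
  have hA0 : A 0 = un := by simp [hA]
  have hB0 : B 0 = un^2 := by simp [hB, hA]
  -- the auxiliary function obtained by the conjugate trick
  set g : ℝ → ℝ := fun h => (-2 * C h) / (A h + Real.sqrt (B h)) with hg
  have hgt : Tendsto g (nhdsWithin 0 (Set.Ioi 0)) (nhds (-un'' / (2 * un))) := by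
    have hden : Tendsto (fun h => A h + Real.sqrt (B h)) (nhds 0) (nhds (2 * un)) := by
      have : Tendsto (fun h => A h + Real.sqrt (B h)) (nhds 0)
          (nhds (A 0 + Real.sqrt (B 0))) :=
        (hAc.continuousAt.add (Real.continuous_sqrt.comp hBc).continuousAt)
      simpa [hA0, hB0, Real.sqrt_sq hpos.le, two_mul] using this
    have hnum : Tendsto (fun h => -2 * C h) (nhds 0) (nhds (-un'')) := by
      have : Tendsto (fun h => -2 * C h) (nhds 0) (nhds (-2 * C 0)) :=
        (hCc.continuousAt.const_mul _)
      convert this using 2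
      simp [hC]; ring
    have h2un : (2 : ℝ) * un ≠ 0 := by positivity
    have := hnum.div hden h2un
    have heq : -un'' / (2 * un) = -un'' / (2 * un) := rfl
    exact (this.mono_left nhdsWithin_le_nhds)
  refine hgt.congr' ?_
  -- eventually in 𝓝[>]0, A h > 0, B h > 0, and then g h equals the original expression
  have hApos : ∀ᶠ h in nhdsWithin 0 (Set.Ioi 0), 0 < A h := by
    have : Tendsto A (nhdsWithin 0 (Set.Ioi 0)) (nhds un) := by
      simpa [hA0] using (hAc.tendsto 0).mono_left (nhdsWithin_le_nhds (s := Set.Ioi (0:ℝ)))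
    exact this.eventually (eventually_gt_nhds hpos)
  have hBpos : ∀ᶠ h in nhdsWithin 0 (Set.Ioi 0), 0 < B h := by
    have : Tendsto B (nhdsWithin 0 (Set.Ioi 0)) (nhds (un^2)) := by
      simpa [hB0] using (hBc.tendsto 0).mono_left (nhdsWithin_le_nhds (s := Set.Ioi (0:ℝ)))
    exact this.eventually (eventually_gt_nhds (by positivity))
  filter_upwards [hApos, hBpos, self_mem_nhdsWithin] with h hAp hBp hmem
  have hh : 0 < h := hmem
  set s : ℝ := Real.sqrt (B h) with hs
  have hsnn : 0 ≤ s := Real.sqrt_nonneg _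
  have hs2 : s^2 = B h := Real.sq_sqrt hBp.le
  have hdpos : 0 < A h + s := by linarith
  have hkey : (A h - s) * (A h + s) = -(4 * h^2 * un * C h) := by
    have : (A h - s) * (A h + s) = (A h)^2 - s^2 := by ring
    rw [this, hs2, hB]; ring
  -- show g h = original expression at h
  show -2 * C h / (A h + s) = (A h - s) / (2 * h^2 * un)
  rw [div_eq_div_iff (ne_of_gt hdpos) (by positivity)]
  nlinarith [hkey]
end

section
/- For u smooth (C³) near t_n, the IQ-RBF Euler local truncation error τ(h) = (u(t_n+h) − (h(1+ε²h²)(2+ε²h²)u'(t_n) + 2u(t_n))/(2(1+ε²h²)))/h satisfies τ(h) = h(u''(t_n)/2 + ε²u(t_n)) + O(h²) as h → 0; in particular, if ε² = −u''(t_n)/(2u(t_n)) (with u(t_n) ≠ 0) then τ(h) = O(h²). -/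
/-! Taylor's theorem gives `u (tₙ + h) = u + h u' + h²/2 u'' + O(h³)`, while the IQ-RBF step expands
as `u + h u' + ε²h³u'/2 - ε²h²u/(1 + ε²h²)`. Hence the truncation error minus `h (u''/2 + ε²u)` is
the Taylor remainder divided by `h` minus `h² (ε²u'/2 + ε⁴h u/(1 + ε²h²))`, and both are `O(h²)`.
The optimal shape parameter is exactly the one that kills the coefficient `u''/2 + ε²u`. -/

open Filter Asymptotics Topology

theorem taylor_isBigO_univ {E : Type*} [NormedAddCommGroup E] [NormedSpace ℝ E]
    {f : ℝ → E} {x₀ : ℝ} {n : ℕ} (hf : ContDiff ℝ (n + 1) f) :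
    (fun x ↦ f x - taylorWithinEval f n Set.univ x₀ x) =O[𝓝 x₀] fun x ↦ (x - x₀) ^ (n + 1) := by
  have hnext : (fun x ↦
      taylorWithinEval f (n + 1) Set.univ x₀ x - taylorWithinEval f n Set.univ x₀ x)
        =O[𝓝 x₀] fun x ↦ (x - x₀) ^ (n + 1) := by
    simp_rw [taylorWithinEval_succ, add_sub_cancel_left]
    simpa using ((isBigO_refl (fun x ↦ (x - x₀) ^ (n + 1)) _).const_mul_left _).smul
      (isBigO_const_one ℝ (iteratedDerivWithin (n + 1) f Set.univ x₀) (𝓝 x₀))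
  exact ((taylor_isLittleO_univ (by exact_mod_cast hf)).isBigO.add hnext).congr_left
    fun x ↦ sub_add_sub_cancel _ _ _

theorem isBigO_sub_taylor_two {E : Type*} [NormedAddCommGroup E] [NormedSpace ℝ E]
    {f : ℝ → E} (x₀ : ℝ) (hf : ContDiff ℝ 3 f) :
    (fun h : ℝ ↦ f (x₀ + h) - (f x₀ + h • deriv f x₀ + (h ^ 2 / 2) • iteratedDeriv 2 f x₀))
      =O[𝓝 0] fun h ↦ h ^ 3 := by
  have hshift : Tendsto (x₀ + ·) (𝓝 0) (𝓝 x₀) := by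
    simpa using (continuous_const_add x₀).tendsto 0
  refine ((taylor_isBigO_univ (n := 2) hf).comp_tendsto hshift).congr (fun h ↦ ?_) fun h ↦ ?_
  · norm_num [taylor_within_apply, iteratedDerivWithin_univ, div_eq_inv_mul]
  · simp

theorem Asymptotics.IsBigO.div_id_pow {𝕜 : Type*} [NormedField 𝕜] {f : 𝕜 → 𝕜} {l : Filter 𝕜}
    {n : ℕ} (hf : f =O[l] fun x ↦ x ^ (n + 1)) : (fun x ↦ f x / x) =O[l] fun x ↦ x ^ n := by
  refine ((isBigO_refl (·⁻¹) l).mul hf).congr_left (fun x ↦ inv_mul_eq_div _ _) |>.trans_le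
    fun x ↦ ?_
  rcases eq_or_ne x 0 with rfl | hx
  · simp
  · rw [pow_succ', inv_mul_cancel_left₀ hx]

theorem iq_euler_truncation_error_sub_leading_eq (ε h x u₀ u₁ u₂ : ℝ) :
    (x - (h * (1 + ε ^ 2 * h ^ 2) * (2 + ε ^ 2 * h ^ 2) * u₁ + 2 * u₀) /
        (2 * (1 + ε ^ 2 * h ^ 2))) / h - h * (u₂ / 2 + ε ^ 2 * u₀) =
      (x - (u₀ + h * u₁ + h ^ 2 / 2 * u₂)) / h -
        h ^ 2 * (ε ^ 2 * u₁ / 2 + ε ^ 4 * h * u₀ / (1 + ε ^ 2 * h ^ 2)) := by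
  rcases eq_or_ne h 0 with rfl | hh
  · simp
  · have : 1 + ε ^ 2 * h ^ 2 ≠ 0 := by positivity
    field_simp
    ring

/-- Leading term of the IQ-RBF Euler local truncation error, and second order
accuracy under the optimal shape parameter ε² = −u''(tₙ)/(2u(tₙ)). -/
theorem iq_euler_truncation_leading_term (u : ℝ → ℝ) (tn ε : ℝ)
    (hu : ContDiff ℝ 3 u) :
    ((fun h : ℝ =>
        (u (tn + h) -
            (h * (1 + ε^2 * h^2) * (2 + ε^2 * h^2) * deriv u tn + 2 * u tn) /
              (2 * (1 + ε^2 * h^2))) / h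
          - h * (iteratedDeriv 2 u tn / 2 + ε^2 * u tn))
        =O[nhds 0] fun h : ℝ => h^2) ∧
    (u tn ≠ 0 → ε^2 = -(iteratedDeriv 2 u tn) / (2 * u tn) →
      (fun h : ℝ =>
          (u (tn + h) -
              (h * (1 + ε^2 * h^2) * (2 + ε^2 * h^2) * deriv u tn + 2 * u tn) /
                (2 * (1 + ε^2 * h^2))) / h)
        =O[nhds 0] fun h : ℝ => h^2) := by
  have hremainder := (isBigO_sub_taylor_two tn hu).div_id_pow
  simp only [smul_eq_mul] at hremainder
  have hcorrection : (fun h : ℝ ↦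
      h ^ 2 * (ε ^ 2 * deriv u tn / 2 + ε ^ 4 * h * u tn / (1 + ε ^ 2 * h ^ 2)))
        =O[𝓝 0] fun h ↦ h ^ 2 := by
    have hcont : Continuous fun h : ℝ ↦
        ε ^ 2 * deriv u tn / 2 + ε ^ 4 * h * u tn / (1 + ε ^ 2 * h ^ 2) := by
      fun_prop (disch := intro; positivity)
    simpa using (isBigO_refl (fun h : ℝ ↦ h ^ 2) _).mul ((hcont.tendsto 0).isBigO_one ℝ)
  have hleading := (hremainder.sub hcorrection).congr_left
    fun h ↦ (iq_euler_truncation_error_sub_leading_eq ε h (u (tn + h)) (u tn) (deriv u tn)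
      (iteratedDeriv 2 u tn)).symm
  refine ⟨hleading, fun hu₀ hε ↦ hleading.congr_left fun h ↦ ?_⟩
  have hcoeff : iteratedDeriv 2 u tn / 2 + ε ^ 2 * u tn = 0 := by
    rw [hε]
    field_simp
    ring
  rw [hcoeff, mul_zero, sub_zero]
end
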